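/- For every decorated permutation π° of size n, each shifted anti-exceedance set I_r(π°) has the same cardinality; in particular, the number of anti-exceedances of π° with respect to the cyclically shifted order <_r is independent of r. -/
import Mathlib


/-- A decorated permutation of size `n`: a permutation of `Fin n` together with a coloring
of its fixed points in two colors (`true` = black = 1, `false` = white = -1). -/
structure DecoratedPerm (n : ℕ) where
  perm : Equiv.Perm (Fin n)
  col : {i : Fin n // perm i = i} → Bool

/-- The position of `i` in the cyclically shifted linear order
`r <_r r+1 <_r ⋯ <_r n-1 <_r 0 <_r ⋯ <_r r-1` on `Fin n`. -/
def shiftVal (n : ℕ) (r i : Fin n) : ℕ := ((i : ℕ) + n - (r : ℕ)) % n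

open Classical in
/-- The shifted anti-exceedance set of a decorated permutation:
`I_r(π°) = { i | i <_r π⁻¹(i), or π(i) = i and i is colored white }`. -/
noncomputable def necklaceOf {n : ℕ} (σ : DecoratedPerm n) : Fin n → Finset (Fin n) :=
  fun r => Finset.univ.filter fun i =>
    shiftVal n r i < shiftVal n r (σ.perm.symm i) ∨ ∃ h : σ.perm i = i, σ.col ⟨i, h⟩ = false

lemma mod_helper (n x : ℕ) (h : x < 2 * n) : x % n = if x < n then x else x - n := by
  split
  · exact Nat.mod_eq_of_lt ‹_›
  · rw [Nat.mod_eq_sub_mod (by omega)]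
    exact Nat.mod_eq_of_lt (by omega)

lemma shiftVal_eq (n : ℕ) (r i : Fin n) :
    shiftVal n r i = if (r : ℕ) ≤ (i : ℕ) then (i : ℕ) - r else (i : ℕ) + n - r := by
  have hi := i.isLt; have hr := r.isLt
  unfold shiftVal
  rw [mod_helper n _ (by omega)]
  split <;> split <;> omega

lemma val_succ (n : ℕ) [NeZero n] (r : Fin n) :
    ((r + 1 : Fin n) : ℕ) = if (r : ℕ) + 1 = n then 0 else (r : ℕ) + 1 := by
  have hr := r.isLt
  rcases Nat.lt_or_ge 1 n with h | h
  · have h1 : (1 : ℕ) % n = 1 := Nat.mod_eq_of_lt h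
    rw [Fin.val_add, Fin.val_one', h1, mod_helper n _ (by omega)]
    split <;> split <;> omega
  · have hn1 : n = 1 := by omega
    subst hn1
    have hr0 : (r : ℕ) = 0 := by omega
    have hlt := (r + 1 : Fin 1).isLt
    have hv : ((r + 1 : Fin 1) : ℕ) = 0 := by omega
    rw [hv, hr0]
    norm_num

lemma shiftVal_lt (n : ℕ) (r i : Fin n) : shiftVal n r i < n := by
  have hi := i.isLt; have hr := r.isLt
  rw [shiftVal_eq]; split <;> omega

lemma shiftVal_eq_zero (n : ℕ) (r i : Fin n) : shiftVal n r i = 0 ↔ i = r := by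
  have hi := i.isLt; have hr := r.isLt
  rw [shiftVal_eq]
  constructor
  · intro h; apply Fin.ext; split at h <;> omega
  · intro h; subst h; simp

lemma shiftVal_injective (n : ℕ) (r : Fin n) {i j : Fin n}
    (h : shiftVal n r i = shiftVal n r j) : i = j := by
  have hi := i.isLt; have hj := j.isLt; have hr := r.isLt
  rw [shiftVal_eq, shiftVal_eq] at h
  apply Fin.ext
  split at h <;> split at h <;> omega

lemma shiftVal_succ_ne (n : ℕ) [NeZero n] (r i : Fin n) (hi : i ≠ r) :
    shiftVal n (r + 1) i + 1 = shiftVal n r i := by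
  have hi' : (i : ℕ) ≠ (r : ℕ) := fun h => hi (Fin.ext h)
  have h1 := i.isLt; have h2 := r.isLt
  rw [shiftVal_eq, shiftVal_eq, val_succ]
  split <;> split <;> split <;> omega

lemma shiftVal_succ_self (n : ℕ) [NeZero n] (r : Fin n) : shiftVal n (r + 1) r = n - 1 := by
  have h2 := r.isLt
  rw [shiftVal_eq, val_succ]
  split <;> split <;> omega

lemma cmp_succ (n : ℕ) [NeZero n] (r i j : Fin n) (hi : i ≠ r) (hj : j ≠ r) :
    (shiftVal n (r + 1) i < shiftVal n (r + 1) j ↔ shiftVal n r i < shiftVal n r j) := by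
  have h1 := shiftVal_succ_ne n r i hi
  have h2 := shiftVal_succ_ne n r j hj
  omega

lemma mem_necklaceOf {n : ℕ} (σ : DecoratedPerm n) (r i : Fin n) :
    i ∈ necklaceOf σ r ↔
      (shiftVal n r i < shiftVal n r (σ.perm.symm i) ∨
        ∃ h : σ.perm i = i, σ.col ⟨i, h⟩ = false) := by
  simp [necklaceOf]

lemma necklace_step {n : ℕ} [NeZero n] (σ : DecoratedPerm n) (r : Fin n) :
    (necklaceOf σ (r + 1)).card = (necklaceOf σ r).card := by
  by_cases hπ : σ.perm r = r
  · have hset : necklaceOf σ (r + 1) = necklaceOf σ r := by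
      ext i
      rw [mem_necklaceOf, mem_necklaceOf]
      have hcmp : shiftVal n (r + 1) i < shiftVal n (r + 1) (σ.perm.symm i) ↔
          shiftVal n r i < shiftVal n r (σ.perm.symm i) := by
        by_cases hi : i = r
        · subst hi
          have hfix : σ.perm.symm i = i := σ.perm.symm_apply_eq.mpr hπ.symm
          rw [hfix]; omega
        · by_cases hpi : σ.perm.symm i = r
          · exact absurd ((σ.perm.symm_apply_eq.mp hpi).trans hπ) hi
          · exact cmp_succ n r i (σ.perm.symm i) hi hpi
      rw [hcmp]
    rw [hset]
  · have hsymm : σ.perm.symm r ≠ r := fun h => hπ ((σ.perm.symm_apply_eq.mp h).symm)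
    have hπr : σ.perm r ≠ r := hπ
    have hr_mem : r ∈ necklaceOf σ r := by
      rw [mem_necklaceOf]
      left
      have h0 : shiftVal n r r = 0 := (shiftVal_eq_zero n r r).mpr rfl
      have h1 : shiftVal n r (σ.perm.symm r) ≠ 0 := fun h =>
        hsymm ((shiftVal_eq_zero n r _).mp h)
      omega
    have hπr_not : σ.perm r ∉ necklaceOf σ r := by
      rw [mem_necklaceOf]
      push_neg
      constructor
      · rw [Equiv.symm_apply_apply, (shiftVal_eq_zero n r r).mpr rfl]
        omega
      · intro h
        exact absurd (σ.perm.injective h) hπ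
    have hset : necklaceOf σ (r + 1) = insert (σ.perm r) ((necklaceOf σ r).erase r) := by
      ext i
      rw [mem_necklaceOf, Finset.mem_insert, Finset.mem_erase, mem_necklaceOf]
      by_cases hi : i = r
      · constructor
        · rintro (h | ⟨hfix, _⟩)
          · exfalso
            rw [hi, shiftVal_succ_self] at h
            have hlt := shiftVal_lt n (r + 1) (σ.perm.symm r)
            omega
          · exact absurd (hi ▸ hfix) hπ
        · rintro (h | ⟨hne, _⟩)
          · exact absurd (hi.symm.trans h).symm hπ
          · exact absurd hi hne
      · by_cases hpr : i = σ.perm r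
        · constructor
          · intro _; exact Or.inl hpr
          · intro _
            left
            have hsymm_i : σ.perm.symm i = r := by rw [hpr, Equiv.symm_apply_apply]
            rw [hsymm_i, shiftVal_succ_self]
            have h1 := shiftVal_lt n (r + 1) i
            have h2 : shiftVal n (r + 1) i ≠ n - 1 := by
              intro h
              have h5 : shiftVal n (r + 1) r = n - 1 := shiftVal_succ_self n r
              exact hi (shiftVal_injective n (r + 1) (h.trans h5.symm))
            omega
        · have hpi : σ.perm.symm i ≠ r := fun h => hpr (σ.perm.symm_apply_eq.mp h)
          rw [cmp_succ n r i (σ.perm.symm i) hi hpi]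
          constructor
          · intro h; exact Or.inr ⟨hi, h⟩
          · rintro (h | ⟨_, h⟩)
            · exact absurd h hpr
            · exact h
    rw [hset, Finset.card_insert_of_notMem, Finset.card_erase_of_mem hr_mem]
    · have hpos : 0 < (necklaceOf σ r).card := Finset.card_pos.mpr ⟨r, hr_mem⟩
      omega
    · intro h
      exact hπr_not (Finset.mem_of_mem_erase h)

/-- All shifted anti-exceedance sets of a decorated permutation have the same cardinality:
the number of anti-exceedances with respect to `<_r` is independent of `r`. -/
theorem card_shifted_antiexceedances_const (n : ℕ) (σ : DecoratedPerm n) (r s : Fin n) :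
    (necklaceOf σ r).card = (necklaceOf σ s).card := by
  have hn : 0 < n := r.pos
  haveI : NeZero n := ⟨hn.ne'⟩
  have aux : ∀ k, ∀ hk : k < n,
      (necklaceOf σ ⟨k, hk⟩).card = (necklaceOf σ ⟨0, hn⟩).card := by
    intro k
    induction k with
    | zero => intro hk; rfl
    | succ m ih =>
      intro hk
      have hm : m < n := by omega
      have heq : (⟨m + 1, hk⟩ : Fin n) = (⟨m, hm⟩ : Fin n) + 1 := by
        apply Fin.ext
        have h1 : ((1 : Fin n) : ℕ) = 1 := by
          rw [Fin.val_one']; exact Nat.mod_eq_of_lt (by omega)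
        rw [Fin.val_add, h1]
        exact (Nat.mod_eq_of_lt hk).symm
      rw [heq, necklace_step, ih hm]
  have hr := aux r.val r.isLt
  have hs := aux s.val s.isLt
  simp only [Fin.eta] at hr hs
  rw [hr, hs]
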